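/- In any hyperbolic fine graph, for any pair of vertices a and x, the set of all vertices lying on some geodesic between a and x is finite. -/

import Mathlib

/-- A graph: vertices, oriented edges, origin/terminus maps, and a
fixed-point-free edge-reversing involution. -/
structure MGraph where
  V : Type
  E : Type
  o : E → V
  t : E → V
  rev : E → E
  rev_o : ∀ e, o (rev e) = t e
  rev_t : ∀ e, t (rev e) = o e
  rev_rev : ∀ e, rev (rev e) = e
  rev_ne : ∀ e, rev e ≠ e

namespace MGraph

variable (X : MGraph)

/-- A walk from `x` to `y` given by a list of consecutive edges. -/
def IsWalk : List X.E → X.V → X.V → Prop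
  | [], x, y => x = y
  | e :: es, x, y => X.o e = x ∧ IsWalk es (X.t e) y

/-- The vertices visited by a walk starting at `x`. -/
def walkVerts : X.V → List X.E → List X.V
  | x, [] => [x]
  | x, e :: es => x :: walkVerts (X.t e) es

/-- The graph metric (length of each edge is 1), valued in `ℕ∞`. -/
noncomputable def dist (x y : X.V) : ℕ∞ :=
  sInf {n : ℕ∞ | ∃ es, X.IsWalk es x y ∧ (es.length : ℕ∞) = n}

/-- The distance from `x` to `y` in the graph with the vertex `v` removed. -/
noncomputable def delDist (v x y : X.V) : ℕ∞ :=
  sInf {n : ℕ∞ | ∃ es, X.IsWalk es x y ∧ v ∉ X.walkVerts x es ∧ (es.length : ℕ∞) = n}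

/-- The angle at `v = t e1 = o e2` between two edges `e1, e2`: the distance
from `o e1` to `t e2` in the graph with the vertex `t e1` removed. -/
noncomputable def angle (e1 e2 : X.E) : ℕ∞ :=
  X.delDist (X.t e1) (X.o e1) (X.t e2)

/-- A geodesic is a walk whose length realizes the distance. -/
def IsGeodesic (es : List X.E) (x y : X.V) : Prop :=
  X.IsWalk es x y ∧ (es.length : ℕ∞) = X.dist x y

/-- `∠_c(x1,x2) > θ` : there are edges `e1, e2` with `t e1 = o e2 = c`, each
lying on a geodesic between `c` and `x_i`, making an angle `> θ` at `c`. -/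
def AngleGT (c x1 x2 : X.V) (θ : ℕ∞) : Prop :=
  ∃ (e1 e2 : X.E) (es1 es2 : List X.E), X.t e1 = c ∧ X.o e2 = c ∧
    X.IsGeodesic (X.rev e1 :: es1) c x1 ∧ X.IsGeodesic (e2 :: es2) c x2 ∧
    θ < X.angle e1 e2

/-- All pairs of consecutive edges of a walk make an angle at most `θ`. -/
def AngleBounded (θ : ℕ∞) : List X.E → Prop
  | [] => True
  | [_] => True
  | e :: e' :: es => X.angle e e' ≤ θ ∧ AngleBounded θ (e' :: es)

/-- `v` is a vertex of the cone of parameter `θ` around the oriented edge `e`: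
it lies on a path starting at `o e` by the edge `e`, of length at most `θ`,
whose consecutive edges make angles at most `θ`. -/
def InConeV (θ : ℕ∞) (e : X.E) (v : X.V) : Prop :=
  ∃ (es : List X.E) (y : X.V), X.IsWalk (e :: es) (X.o e) y ∧
    ((e :: es).length : ℕ∞) ≤ θ ∧ X.AngleBounded θ (e :: es) ∧
    v ∈ X.walkVerts (X.o e) (e :: es)

/-- `ε` is an edge of the cone of parameter `θ` around the oriented edge `e`. -/
def InConeE (θ : ℕ∞) (e ε : X.E) : Prop :=
  ∃ (es : List X.E) (y : X.V), X.IsWalk (e :: es) (X.o e) y ∧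
    ((e :: es).length : ℕ∞) ≤ θ ∧ X.AngleBounded θ (e :: es) ∧
    (ε ∈ e :: es ∨ X.rev ε ∈ e :: es)

/-- A graph is fine if for each edge `e` and each `L`, only finitely many
edges arrive at `o e` making an angle at most `L` with `e`. -/
def Fine : Prop :=
  ∀ (e : X.E) (L : ℕ), {e' : X.E | X.t e' = X.o e ∧ X.angle e' e ≤ (L : ℕ∞)}.Finite

/-- δ-hyperbolicity: geodesic triangles are δ-thin. -/
def Hyperbolic (δ : ℕ) : Prop :=
  ∀ (a b c : X.V) (p q r : List X.E),
    X.IsGeodesic p a b → X.IsGeodesic q b c → X.IsGeodesic r a c →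
    ∀ v ∈ X.walkVerts a p, ∃ w, (w ∈ X.walkVerts b q ∨ w ∈ X.walkVerts a r) ∧
      X.dist v w ≤ (δ : ℕ∞)

/-- The four point inequality form of δ-hyperbolicity. -/
def FourPoint (δ : ℕ) : Prop :=
  ∀ a x y y' : X.V,
    X.dist a x + X.dist y y' ≤
      max (X.dist a y + X.dist y' x) (X.dist a y' + X.dist y x) + (δ : ℕ∞)

/-- Connectedness. -/
def Connected : Prop := ∀ x y : X.V, ∃ es, X.IsWalk es x y

/-- `t` is on an `α`-geodesic between `x` and `a`. -/
def OnAlphaGeod (α : ℕ∞) (t x a : X.V) : Prop :=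
  X.dist x t + X.dist t a ≤ X.dist x a + α

/-- The set `𝓔_{a,x}(ρ)` of edges at distance `ρ` from `a` lying on
geodesics between `a` and `x`. -/
def GeodEdgeAt (a x : X.V) (ρ : ℕ∞) (e : X.E) : Prop :=
  X.dist a (X.o e) = ρ ∧ ∃ es, (X.IsGeodesic es a x ∨ X.IsGeodesic es x a) ∧ e ∈ es

/-- The set `U_α[a,x]` of points on `α`-conical-geodesics between `x` and `a`. -/
def ConicalSet (α : ℕ) (a x : X.V) : Set X.V :=
  {t | X.OnAlphaGeod (α : ℕ∞) t x a ∧ X.dist a t ≤ X.dist a x ∧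
       ∀ e, X.GeodEdgeAt a x (X.dist a t) e → X.InConeV ((40 * α : ℕ) : ℕ∞) e t}

/-!
A geodesic `e :: g` from `v` to `x` never returns to `v`, so for two such geodesics `e :: g` and
`e₀ :: g₀`, the walk `g` followed by `g₀` backwards joins `t e` to `t e₀` in the graph with `v`
deleted: the angle at `v` between `rev e` and `e₀` is at most `2 (d(v, x) - 1)`. By fineness only
finitely many edges start a geodesic from `v` to `x`, and induction on the length shows that there
are only finitely many geodesics from `a` to `x`, each visiting finitely many vertices.
-/

variable {X}

theorem mem_walkVerts_self (x : X.V) (es : List X.E) : x ∈ X.walkVerts x es := by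
  cases es <;> simp [walkVerts]

theorem dist_le_length {es : List X.E} {x y : X.V} (h : X.IsWalk es x y) :
    X.dist x y ≤ es.length :=
  sInf_le ⟨es, h, rfl⟩

theorem delDist_le_length {es : List X.E} {v x y : X.V} (h : X.IsWalk es x y)
    (hv : v ∉ X.walkVerts x es) : X.delDist v x y ≤ es.length :=
  sInf_le ⟨es, h, hv, rfl⟩

namespace IsWalk

theorem append {es fs : List X.E} {x y z : X.V} (h₁ : X.IsWalk es x y)
    (h₂ : X.IsWalk fs y z) : X.IsWalk (es ++ fs) x z := by
  induction es generalizing x with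
  | nil => cases h₁; exact h₂
  | cons e es ih => exact ⟨h₁.1, ih h₁.2⟩

theorem mem_walkVerts_append {es fs : List X.E} {x y v : X.V} (h : X.IsWalk es x y)
    (hv : v ∈ X.walkVerts x (es ++ fs)) : v ∈ X.walkVerts x es ∨ v ∈ X.walkVerts y fs := by
  induction es generalizing x with
  | nil =>
    cases h
    exact .inr hv
  | cons e es ih =>
    rcases List.mem_cons.mp hv with rfl | hv
    · exact .inl List.mem_cons_self
    · exact (ih h.2 hv).imp_left (List.mem_cons_of_mem _)

theorem reverse {es : List X.E} {x y : X.V} (h : X.IsWalk es x y) :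
    X.IsWalk (es.map X.rev).reverse y x := by
  induction es generalizing x with
  | nil => exact h.symm
  | cons e es ih =>
    rw [List.map_cons, List.reverse_cons]
    exact (ih h.2).append ⟨X.rev_o e, by rw [X.rev_t, h.1]; rfl⟩

theorem mem_walkVerts_of_mem_reverse {es : List X.E} {x y v : X.V} (h : X.IsWalk es x y)
    (hv : v ∈ X.walkVerts y (es.map X.rev).reverse) : v ∈ X.walkVerts x es := by
  induction es generalizing x with
  | nil => cases h; exact hv
  | cons e es ih =>
    rw [List.map_cons, List.reverse_cons] at hv
    rcases (reverse h.2).mem_walkVerts_append hv with hv | hv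
    · exact List.mem_cons_of_mem _ (ih h.2 hv)
    · simp only [walkVerts, X.rev_t, h.1, List.mem_cons, List.not_mem_nil, or_false] at hv
      rcases hv with rfl | rfl
      · exact List.mem_cons_of_mem _ (mem_walkVerts_self _ _)
      · exact List.mem_cons_self

theorem exists_walk_of_mem_walkVerts {es : List X.E} {x y v : X.V} (h : X.IsWalk es x y)
    (hv : v ∈ X.walkVerts x es) : ∃ fs, X.IsWalk fs v y ∧ fs.length ≤ es.length := by
  induction es generalizing x with
  | nil => cases h; exact ⟨[], List.mem_singleton.mp hv, le_rfl⟩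
  | cons e es ih =>
    rcases List.mem_cons.mp hv with rfl | hv
    · exact ⟨e :: es, h, le_rfl⟩
    · obtain ⟨fs, hfs, hlen⟩ := ih h.2 hv
      exact ⟨fs, hfs, hlen.trans (Nat.le_succ _)⟩

end IsWalk

namespace IsGeodesic

theorem tail {e : X.E} {es : List X.E} {v x : X.V} (h : X.IsGeodesic (e :: es) v x) :
    X.IsGeodesic es (X.t e) x := by
  refine ⟨h.1.2, le_antisymm (le_sInf ?_) (dist_le_length h.1.2)⟩
  rintro _ ⟨fs, hfs, rfl⟩
  have hle : ((e :: es).length : ℕ∞) ≤ (e :: fs).length :=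
    h.2 ▸ dist_le_length (show X.IsWalk (e :: fs) v x from ⟨h.1.1, hfs⟩)
  simpa using hle

theorem notMem_walkVerts_tail {e : X.E} {es : List X.E} {v x : X.V}
    (h : X.IsGeodesic (e :: es) v x) : v ∉ X.walkVerts (X.t e) es := by
  intro hv
  obtain ⟨fs, hfs, hlen⟩ := h.1.2.exists_walk_of_mem_walkVerts hv
  have hle : ((e :: es).length : ℕ∞) ≤ fs.length := h.2 ▸ dist_le_length hfs
  norm_cast at hle
  simp only [List.length_cons] at hle
  omega

theorem angle_rev_le {e e₀ : X.E} {es es₀ : List X.E} {v x : X.V}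
    (h : X.IsGeodesic (e :: es) v x) (h₀ : X.IsGeodesic (e₀ :: es₀) v x) :
    X.angle (X.rev e) e₀ ≤ (es.length + es₀.length : ℕ) := by
  have hwalk : X.IsWalk (es ++ (es₀.map X.rev).reverse) (X.t e) (X.t e₀) :=
    h.1.2.append h₀.1.2.reverse
  have hv : v ∉ X.walkVerts (X.t e) (es ++ (es₀.map X.rev).reverse) := fun hv =>
    (h.1.2.mem_walkVerts_append hv).elim h.notMem_walkVerts_tail fun hv =>
      h₀.notMem_walkVerts_tail (h₀.1.2.mem_walkVerts_of_mem_reverse hv)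
  simpa [angle, X.rev_t, X.rev_o, h.1.1] using delDist_le_length hwalk hv

end IsGeodesic

theorem finite_setOf_isGeodesic_cons (hfine : X.Fine) (v x : X.V) :
    {e : X.E | ∃ es, X.IsGeodesic (e :: es) v x}.Finite := by
  rcases Set.eq_empty_or_nonempty {e : X.E | ∃ es, X.IsGeodesic (e :: es) v x} with
    hemp | ⟨e₀, es₀, h₀⟩
  · exact hemp ▸ Set.finite_empty
  refine ((hfine e₀ (2 * es₀.length)).image X.rev).subset ?_
  rintro e ⟨es, h⟩
  have hlen : es.length = es₀.length := by
    have := h.2.trans h₀.2.symm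
    norm_cast at this
    simpa using this
  refine ⟨X.rev e, ⟨by rw [X.rev_t, h.1.1, h₀.1.1], ?_⟩, X.rev_rev e⟩
  have := h.angle_rev_le h₀
  rwa [hlen, ← two_mul] at this

theorem finite_setOf_isGeodesic_of_length (hfine : X.Fine) (x : X.V) (n : ℕ) (v : X.V) :
    {es : List X.E | X.IsGeodesic es v x ∧ es.length = n}.Finite := by
  induction n generalizing v with
  | zero =>
    refine (Set.finite_singleton []).subset ?_
    rintro es ⟨-, hlen⟩
    exact List.length_eq_zero_iff.mp hlen
  | succ n ih =>
    refine ((finite_setOf_isGeodesic_cons hfine v x).biUnion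
      fun e _ => (ih (X.t e)).image (List.cons e)).subset ?_
    rintro (_ | ⟨e, es⟩) ⟨h, hlen⟩
    · cases hlen
    · exact Set.mem_biUnion ⟨es, h⟩ ⟨es, ⟨h.tail, Nat.succ_injective hlen⟩, rfl⟩

theorem finite_setOf_isGeodesic (hfine : X.Fine) (v x : X.V) :
    {es : List X.E | X.IsGeodesic es v x}.Finite :=
  (finite_setOf_isGeodesic_of_length hfine x (X.dist v x).toNat v).subset fun es h =>
    ⟨h, by rw [← h.2, ENat.toNat_natCast]⟩

theorem finite_setOf_mem_walkVerts_isGeodesic (hfine : X.Fine) (v x : X.V) :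
    {w : X.V | ∃ es, X.IsGeodesic es v x ∧ w ∈ X.walkVerts v es}.Finite :=
  ((finite_setOf_isGeodesic hfine v x).biUnion fun es _ => (X.walkVerts v es).finite_toSet).subset
    fun _ ⟨_, h, hw⟩ => Set.mem_biUnion h hw

end MGraph

theorem stmt_8_general (X : MGraph) (hfine : X.Fine) (a x : X.V) :
    {v : X.V | ∃ es : List X.E,
      (X.IsGeodesic es a x ∧ v ∈ X.walkVerts a es) ∨
      (X.IsGeodesic es x a ∧ v ∈ X.walkVerts x es)}.Finite :=
  ((X.finite_setOf_mem_walkVerts_isGeodesic hfine a x).union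
      (X.finite_setOf_mem_walkVerts_isGeodesic hfine x a)).subset
    fun _ ⟨es, hv⟩ => hv.imp (⟨es, ·⟩) (⟨es, ·⟩)

/-- in a hyperbolic fine graph, the set of vertices lying on some
geodesic between two given vertices `a` and `x` is finite. -/
theorem stmt_8 (X : MGraph) (δ : ℕ) (hδpos : 0 < δ) (hδ : X.Hyperbolic δ)
    (hfine : X.Fine) (a x : X.V) :
    {v : X.V | ∃ es : List X.E,
      (X.IsGeodesic es a x ∧ v ∈ X.walkVerts a es) ∨
      (X.IsGeodesic es x a ∧ v ∈ X.walkVerts x es)}.Finite :=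
  stmt_8_general X hfine a x
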